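/- arXiv:2205.06864 — 2 statements merged into one kernel-verified Lean document; each statement's English description precedes it below -/
import Mathlib

section
/- Let X be a doubling metric measure space (closed balls of positive radius having positive finite measure) such that for every x ∈ X and r > 0, μ(B(x,r) △ B(y,r)) → 0 as y → x. Let F ⊆ L^p(X), 1 < p < ∞, be bounded, E ⊆ X bounded, and r > 0. Then {(A_r f)·χ_E : f ∈ F} is relatively compact (equivalently, totally bounded) in L^p(X). -/
/-!
On the bounded set `E` the measures of the balls `B(x, r)`, `x ∈ E`, are bounded above, and by
doubling also away from zero. With Hölder's inequality this makes the averages `A_r f`, `f ∈ F`,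
uniformly bounded on `E`, with an oscillation `|A_r f y - A_r f z|` controlled uniformly in `f` by
`μ(B(y, r) △ B(z, r))`. The symmetric difference hypothesis and Vitali's covering theorem then
cover `E`, up to a set of small measure, by finitely many disjoint measurable pieces on each of
which every `A_r f` oscillates by less than `δ`. Sampling `A_r f` at one point of each piece and
replacing the samples by a nearby point of a finite net of a cube in `ℝᴺ` gives finitely many
step functions, one of which approximates `(A_r f)·χ_E` in `Lᵖ`.
-/

open MeasureTheory Metric Filter
open scoped ENNReal

/-- The average function `A_r f (x) = μ(B(x,r))⁻¹ ∫_{B(x,r)} f dμ`. -/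
noncomputable def avg {X : Type*} [MeasurableSpace X] [MetricSpace X]
    (μ : Measure X) (r : ℝ) (f : X → ℝ) (x : X) : ℝ :=
  (μ (closedBall x r)).toReal⁻¹ * ∫ y in closedBall x r, f y ∂μ

open Set Function
open scoped symmDiff Topology

section Balls

variable {X : Type*} [MetricSpace X] [MeasurableSpace X] {μ : Measure X}

theorem measure_ne_top_of_isBounded (hfin : ∀ (x : X) (s : ℝ), 0 < s → μ (closedBall x s) ≠ ⊤)
    {S : Set X} (hS : Bornology.IsBounded S) : μ S ≠ ⊤ := by
  rcases S.eq_empty_or_nonempty with rfl | ⟨x, hx⟩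
  · simp
  obtain ⟨R, hR⟩ := hS.subset_closedBall x
  exact measure_ne_top_of_subset (hR.trans (closedBall_subset_closedBall (le_max_left R 1)))
    (hfin x _ (lt_max_of_lt_right one_pos))

theorem measure_closedBall_two_pow_mul_le {γ : ℝ}
    (hdbl : ∀ (x : X) (s : ℝ), 0 < s →
      μ (closedBall x (2 * s)) ≤ ENNReal.ofReal γ * μ (closedBall x s))
    (x : X) {s : ℝ} (hs : 0 < s) (k : ℕ) :
    μ (closedBall x (2 ^ k * s)) ≤ ENNReal.ofReal γ ^ k * μ (closedBall x s) := by
  induction k with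
  | zero => simp
  | succ k ih =>
    calc μ (closedBall x (2 ^ (k + 1) * s))
        = μ (closedBall x (2 * (2 ^ k * s))) := by rw [pow_succ, mul_comm _ (2 : ℝ), mul_assoc]
      _ ≤ ENNReal.ofReal γ * μ (closedBall x (2 ^ k * s)) := hdbl x _ (by positivity)
      _ ≤ ENNReal.ofReal γ ^ (k + 1) * μ (closedBall x s) := by
        rw [pow_succ', mul_assoc]; gcongr

/-- Doubling compares every ball `B(x, r)` centred in a bounded set with one fixed ball
`B(x₀, r) ⊆ B(x, 2ᵏ r)`, which gives a uniform lower bound. -/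
theorem exists_measure_closedBall_mem_Icc {γ : ℝ} (hγ : 0 < γ)
    (hdbl : ∀ (x : X) (s : ℝ), 0 < s →
      μ (closedBall x (2 * s)) ≤ ENNReal.ofReal γ * μ (closedBall x s))
    (hball : ∀ (x : X) (s : ℝ), 0 < s → μ (closedBall x s) ≠ 0 ∧ μ (closedBall x s) ≠ ⊤)
    {E : Set X} (hE : Bornology.IsBounded E) {r : ℝ} (hr : 0 < r) :
    ∃ m V : ℝ, 0 < m ∧ 0 ≤ V ∧
      ∀ x ∈ E, μ (closedBall x r) ∈ Icc (ENNReal.ofReal m) (ENNReal.ofReal V) := by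
  rcases E.eq_empty_or_nonempty with rfl | ⟨x₀, hx₀⟩
  · exact ⟨1, 0, one_pos, le_rfl, by simp⟩
  obtain ⟨R, hR⟩ := hE.subset_closedBall x₀
  have hR0 : 0 ≤ R := dist_nonneg.trans (hR hx₀)
  obtain ⟨k, hk⟩ : ∃ k : ℕ, R + r ≤ 2 ^ k * r := by
    obtain ⟨k, hk⟩ := pow_unbounded_of_one_lt ((R + r) / r) (one_lt_two (α := ℝ))
    exact ⟨k, ((div_lt_iff₀ hr).1 hk).le⟩
  have hγk : ENNReal.ofReal γ ^ k ≠ 0 := pow_ne_zero _ (ENNReal.ofReal_pos.2 hγ).ne'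
  refine ⟨μ.real (closedBall x₀ r) / γ ^ k, μ.real (closedBall x₀ (R + r)),
    div_pos (ENNReal.toReal_pos (hball x₀ r hr).1 (hball x₀ r hr).2) (pow_pos hγ k),
    measureReal_nonneg, fun x hx => ⟨?_, ?_⟩⟩
  · have hsub : closedBall x₀ r ⊆ closedBall x (2 ^ k * r) := fun w hw => by
      have := hR hx
      rw [mem_closedBall] at *
      linarith [dist_triangle_right w x x₀]
    rw [ENNReal.ofReal_div_of_pos (pow_pos hγ k), ENNReal.ofReal_pow hγ.le, measureReal_def,
      ENNReal.ofReal_toReal (hball x₀ r hr).2, ENNReal.div_le_iff hγk (by finiteness), mul_comm]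
    exact (measure_mono hsub).trans (measure_closedBall_two_pow_mul_le hdbl x hr k)
  · have hsub : closedBall x r ⊆ closedBall x₀ (R + r) := fun w hw => by
      have := hR hx
      rw [mem_closedBall] at *
      linarith [dist_triangle w x x₀]
    rw [measureReal_def, ENNReal.ofReal_toReal (hball x₀ _ (by positivity)).2]
    exact measure_mono hsub

end Balls

section SetIntegral

variable {X : Type*} [MeasurableSpace X] {μ : Measure X} {p : ℝ} {f : X → ℝ} {C : ℝ≥0∞}

theorem eLpNorm_one_restrict_le (hp : 1 ≤ p) (hf : AEStronglyMeasurable f μ)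
    (hfC : eLpNorm f (ENNReal.ofReal p) μ ≤ C) (A : Set X) :
    eLpNorm f 1 (μ.restrict A) ≤ C * μ A ^ (1 - p⁻¹) := by
  have h := eLpNorm_le_eLpNorm_mul_rpow_measure_univ (μ := μ.restrict A)
    (ENNReal.one_le_ofReal.2 hp) hf.restrict
  rw [Measure.restrict_apply_univ, ENNReal.toReal_one, ENNReal.toReal_ofReal (by linarith),
    one_div_one, one_div] at h
  exact h.trans (by gcongr; exact (eLpNorm_mono_measure f Measure.restrict_le_self).trans hfC)

theorem mul_rpow_one_sub_inv_ne_top (hp : 1 ≤ p) (hC : C ≠ ⊤) {a : ℝ≥0∞} (ha : a ≠ ⊤) :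
    C * a ^ (1 - p⁻¹) ≠ ⊤ :=
  ENNReal.mul_ne_top hC (ENNReal.rpow_ne_top_of_nonneg (by simp [inv_le_one_of_one_le₀ hp]) ha)

theorem integrableOn_of_eLpNorm_le (hp : 1 ≤ p) (hf : AEStronglyMeasurable f μ)
    (hfC : eLpNorm f (ENNReal.ofReal p) μ ≤ C) (hC : C ≠ ⊤) {A : Set X} (hA : μ A ≠ ⊤) :
    IntegrableOn f A μ :=
  memLp_one_iff_integrable.1 ⟨hf.restrict, (eLpNorm_one_restrict_le hp hf hfC A).trans_lt
    (mul_rpow_one_sub_inv_ne_top hp hC hA).lt_top⟩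

theorem abs_setIntegral_le (hp : 1 ≤ p) (hf : AEStronglyMeasurable f μ)
    (hfC : eLpNorm f (ENNReal.ofReal p) μ ≤ C) (hC : C ≠ ⊤) {A : Set X} (hA : μ A ≠ ⊤) :
    |∫ x in A, f x ∂μ| ≤ C.toReal * μ.real A ^ (1 - p⁻¹) := by
  calc |∫ x in A, f x ∂μ| ≤ ∫ x in A, |f x| ∂μ := abs_integral_le_integral_abs
    _ = (eLpNorm f 1 (μ.restrict A)).toReal := by
      rw [eLpNorm_one_eq_lintegral_enorm, ← integral_norm_eq_lintegral_enorm hf.restrict]; rfl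
    _ ≤ C.toReal * μ.real A ^ (1 - p⁻¹) := by
      rw [measureReal_def, ENNReal.toReal_rpow, ← ENNReal.toReal_mul]
      exact ENNReal.toReal_mono (mul_rpow_one_sub_inv_ne_top hp hC hA)
        (eLpNorm_one_restrict_le hp hf hfC A)

theorem abs_setIntegral_sub_setIntegral_le (hp : 1 ≤ p) (hf : AEStronglyMeasurable f μ)
    (hfC : eLpNorm f (ENNReal.ofReal p) μ ≤ C) (hC : C ≠ ⊤) {A B : Set X}
    (hA : MeasurableSet A) (hB : MeasurableSet B) (hA' : μ A ≠ ⊤) (hB' : μ B ≠ ⊤) :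
    |∫ x in A, f x ∂μ - ∫ x in B, f x ∂μ| ≤ C.toReal * μ.real (A ∆ B) ^ (1 - p⁻¹) := by
  have hAB' : ∀ x, |A.indicator f x - B.indicator f x| = (A ∆ B).indicator (‖f ·‖) x := by
    intro x
    rw [← Real.norm_eq_abs, ← apply_indicator_symmDiff norm_neg, norm_indicator_eq_indicator_norm]
  calc |∫ x in A, f x ∂μ - ∫ x in B, f x ∂μ|
      = |∫ x, A.indicator f x - B.indicator f x ∂μ| := by
        rw [integral_sub
          ((integrable_indicator_iff hA).2 (integrableOn_of_eLpNorm_le hp hf hfC hC hA'))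
          ((integrable_indicator_iff hB).2 (integrableOn_of_eLpNorm_le hp hf hfC hC hB')),
          integral_indicator hA, integral_indicator hB]
    _ ≤ ∫ x, |A.indicator f x - B.indicator f x| ∂μ := abs_integral_le_integral_abs
    _ = |∫ x in A ∆ B, ‖f x‖ ∂μ| := by
      simp_rw [hAB', integral_indicator (hA.symmDiff hB)]
      exact (abs_of_nonneg (integral_nonneg fun _ => norm_nonneg _)).symm
    _ ≤ C.toReal * μ.real (A ∆ B) ^ (1 - p⁻¹) :=
      abs_setIntegral_le hp hf.norm (by rwa [eLpNorm_norm]) hC (measure_symmDiff_ne_top hA' hB')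

theorem measureReal_mem_Icc_of_measure_mem_Icc {s : Set X} {m V : ℝ} (hm : 0 < m)
    (hs : μ s ∈ Icc (ENNReal.ofReal m) (ENNReal.ofReal V)) : μ.real s ∈ Icc m V := by
  have hfin : μ s ≠ ⊤ := ne_top_of_le_ne_top ENNReal.ofReal_ne_top hs.2
  have hV : 0 < V := ENNReal.ofReal_pos.1 ((ENNReal.ofReal_pos.2 hm).trans_le (hs.1.trans hs.2))
  exact ⟨(ENNReal.ofReal_le_iff_le_toReal hfin).1 hs.1, ENNReal.toReal_le_of_le_ofReal hV.le hs.2⟩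

end SetIntegral

section Average

variable {X : Type*} [MetricSpace X] [MeasurableSpace X] {μ : Measure X} {p : ℝ} {f : X → ℝ}
  {C : ℝ≥0∞} {r m V : ℝ}

theorem abs_avg_le (hp : 1 ≤ p) (hf : AEStronglyMeasurable f μ)
    (hfC : eLpNorm f (ENNReal.ofReal p) μ ≤ C) (hC : C ≠ ⊤) (hm : 0 < m) {x : X}
    (hx : μ (closedBall x r) ∈ Icc (ENNReal.ofReal m) (ENNReal.ofReal V)) :
    |avg μ r f x| ≤ C.toReal * V ^ (1 - p⁻¹) / m := by
  have ha := measureReal_mem_Icc_of_measure_mem_Icc hm hx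
  have he : 0 ≤ 1 - p⁻¹ := by simp [inv_le_one_of_one_le₀ hp]
  rw [avg, ← measureReal_def, abs_mul, abs_inv, abs_of_pos (hm.trans_le ha.1), inv_mul_eq_div]
  calc |∫ y in closedBall x r, f y ∂μ| / μ.real (closedBall x r)
      ≤ C.toReal * μ.real (closedBall x r) ^ (1 - p⁻¹) / μ.real (closedBall x r) := by
        gcongr
        exact abs_setIntegral_le hp hf hfC hC (ne_top_of_le_ne_top ENNReal.ofReal_ne_top hx.2)
    _ ≤ C.toReal * V ^ (1 - p⁻¹) / m := by
        have hV : 0 ≤ V := hm.le.trans (ha.1.trans ha.2)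
        exact div_le_div₀ (by positivity) (by gcongr; exact ha.2) hm ha.1

/-- The measures `a, b` of the two balls differ by at most `μ(B_y ∆ B_z)`, and
`A_r f y - A_r f z = ((I - J) + A_r f z · (b - a)) / a` for the integrals `I, J` of `f`
over them. -/
theorem abs_avg_sub_avg_le [OpensMeasurableSpace X] (hp : 1 ≤ p)
    (hf : AEStronglyMeasurable f μ) (hfC : eLpNorm f (ENNReal.ofReal p) μ ≤ C) (hC : C ≠ ⊤)
    (hm : 0 < m) {y z : X}
    (hy : μ (closedBall y r) ∈ Icc (ENNReal.ofReal m) (ENNReal.ofReal V))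
    (hz : μ (closedBall z r) ∈ Icc (ENNReal.ofReal m) (ENNReal.ofReal V)) :
    |avg μ r f y - avg μ r f z| ≤
      (C.toReal * μ.real (closedBall y r ∆ closedBall z r) ^ (1 - p⁻¹) +
        C.toReal * V ^ (1 - p⁻¹) / m * μ.real (closedBall y r ∆ closedBall z r)) / m := by
  have hy' : μ (closedBall y r) ≠ ⊤ := ne_top_of_le_ne_top ENNReal.ofReal_ne_top hy.2
  have hz' : μ (closedBall z r) ≠ ⊤ := ne_top_of_le_ne_top ENNReal.ofReal_ne_top hz.2
  have ha := (measureReal_mem_Icc_of_measure_mem_Icc hm hy).1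
  have hb := (measureReal_mem_Icc_of_measure_mem_Icc hm hz).1
  have hIJ := abs_setIntegral_sub_setIntegral_le hp hf hfC hC measurableSet_closedBall
    measurableSet_closedBall hy' hz'
  have hab : |μ.real (closedBall z r) - μ.real (closedBall y r)| ≤
      μ.real (closedBall y r ∆ closedBall z r) := by
    rw [abs_sub_comm]
    exact abs_measureReal_sub_le_measureReal_symmDiff' measurableSet_closedBall.nullMeasurableSet
      measurableSet_closedBall.nullMeasurableSet hy' hz'
  have hsplit : avg μ r f y - avg μ r f z = ((∫ x in closedBall y r, f x ∂μ -
      ∫ x in closedBall z r, f x ∂μ) + avg μ r f z *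
        (μ.real (closedBall z r) - μ.real (closedBall y r))) / μ.real (closedBall y r) := by
    rw [avg, avg, ← measureReal_def, ← measureReal_def]
    field_simp [(hm.trans_le ha).ne', (hm.trans_le hb).ne']
    ring
  have hM := abs_avg_le hp hf hfC hC hm hz
  rw [hsplit, abs_div, abs_of_pos (hm.trans_le ha)]
  refine div_le_div₀ (add_nonneg (by positivity) (mul_nonneg ((abs_nonneg _).trans hM)
    measureReal_nonneg)) ((abs_add_le _ _).trans (add_le_add hIJ ?_)) hm ha
  rw [abs_mul]
  exact mul_le_mul hM hab (abs_nonneg _) ((abs_nonneg _).trans hM)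

theorem exists_forall_abs_avg_sub_avg_lt [OpensMeasurableSpace X] (hp : 1 < p) (hC : C ≠ ⊤)
    (hm : 0 < m) {δ : ℝ} (hδ : 0 < δ) :
    ∃ η : ℝ≥0∞, 0 < η ∧ ∀ f : X → ℝ, AEStronglyMeasurable f μ →
      eLpNorm f (ENNReal.ofReal p) μ ≤ C → ∀ y z : X,
      μ (closedBall y r) ∈ Icc (ENNReal.ofReal m) (ENNReal.ofReal V) →
      μ (closedBall z r) ∈ Icc (ENNReal.ofReal m) (ENNReal.ofReal V) →
      μ (closedBall y r ∆ closedBall z r) < η → |avg μ r f y - avg μ r f z| < δ := by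
  set ω : ℝ → ℝ := fun s => (C.toReal * s ^ (1 - p⁻¹) + C.toReal * V ^ (1 - p⁻¹) / m * s) / m
  have he : 0 < 1 - p⁻¹ := sub_pos.2 (inv_lt_one_of_one_lt₀ hp)
  have hω : Tendsto ω (𝓝 0) (𝓝 0) := by
    have : ContinuousAt ω 0 := by
      have := Real.continuousAt_rpow_const 0 (1 - p⁻¹) (Or.inr he.le)
      fun_prop (disch := exact hm.ne')
    simpa [ω, Real.zero_rpow he.ne'] using this.tendsto
  obtain ⟨t, ht, htω⟩ := Metric.eventually_nhds_iff.1 (hω.eventually (gt_mem_nhds hδ))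
  refine ⟨ENNReal.ofReal t, ENNReal.ofReal_pos.2 ht, fun f hf hfC y z hy hz hyz => ?_⟩
  refine (abs_avg_sub_avg_le hp.le hf hfC hC hm hy hz).trans_lt (htω ?_)
  rw [Real.dist_0_eq_abs, abs_of_nonneg measureReal_nonneg]
  exact ENNReal.toReal_lt_of_lt_ofReal hyz

end Average

section Covering

theorem exists_measure_iUnion_diff_iUnion_fin_lt {X : Type*} [MeasurableSpace X] {μ : Measure X}
    {V : ℕ → Set X} (hV : ∀ n, MeasurableSet (V n)) (hfin : μ (⋃ n, V n) ≠ ⊤) {τ : ℝ≥0∞}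
    (hτ : 0 < τ) : ∃ N : ℕ, μ ((⋃ n, V n) \ ⋃ i : Fin N, V i) < τ := by
  set S : ℕ → Set X := fun N => ⋃ i : Fin N, V i
  have hS : Monotone S := fun a b hab =>
    iUnion_subset fun i => subset_iUnion_of_subset (Fin.castLE hab i) subset_rfl
  have hSV : ⋃ N, S N = ⋃ n, V n := by
    ext x
    simp only [S, mem_iUnion]
    exact ⟨fun ⟨_, i, h⟩ => ⟨i, h⟩, fun ⟨n, h⟩ => ⟨n + 1, ⟨n, n.lt_succ_self⟩, h⟩⟩
  have hlim := ENNReal.Tendsto.sub tendsto_const_nhds (tendsto_measure_iUnion_atTop (μ := μ) hS)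
    (Or.inl hfin)
  rw [hSV, tsub_self] at hlim
  obtain ⟨N, hN⟩ := (hlim.eventually (gt_mem_nhds hτ)).exists
  refine ⟨N, ?_⟩
  rwa [measure_sdiff (iUnion_subset fun i : Fin N => subset_iUnion V i)
    (MeasurableSet.iUnion fun i : Fin N => hV i).nullMeasurableSet
    (measure_ne_top_of_subset (iUnion_subset fun i : Fin N => subset_iUnion V i) hfin)]

variable {X : Type*} [MetricSpace X] [MeasurableSpace X] [OpensMeasurableSpace X] {μ : Measure X}

/-- Vitali's covering theorem; the disjoint balls it produces lie in `U`, which has finite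
measure, and all have positive measure, so there are only countably many of them. -/
theorem exists_countable_cover_closedBall {E U : Set X} (hU : IsOpen U) (hEU : E ⊆ U)
    (hμU : μ U ≠ ⊤) (hpos : ∀ x ∈ E, ∀ s, 0 < s → μ (closedBall x s) ≠ 0) {P : X → X → Prop}
    (hP : ∀ x ∈ E, ∀ᶠ w in 𝓝 x, P x w) :
    ∃ (u : Set X) (ρ : X → ℝ), u ⊆ E ∧ u.Countable ∧ E ⊆ ⋃ y ∈ u, closedBall y (ρ y) ∧
      ∀ y ∈ u, closedBall y (ρ y) ⊆ U ∩ {w | P y w} := by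
  have hnhds : ∀ x ∈ E, ∃ d > 0, ball x d ⊆ U ∩ {w | P x w} := fun x hx =>
    Metric.mem_nhds_iff.1 (inter_mem (hU.mem_nhds (hEU hx)) (hP x hx))
  choose! d hd hdU using hnhds
  set ρ : X → ℝ := fun x => min (d x) 1 / 5
  have hρ : ∀ x ∈ E, 0 < ρ x := fun x hx => by have := hd x hx; positivity
  have hρd : ∀ x ∈ E, closedBall x (4 * ρ x) ⊆ U ∩ {w | P x w} := fun x hx =>
    (closedBall_subset_ball (by
      simp only [ρ]; linarith [min_le_left (d x) 1, lt_min (hd x hx) one_pos])).trans (hdU x hx)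
  obtain ⟨u, huE, hdisj, hcov⟩ := Vitali.exists_disjoint_subfamily_covering_enlargement_closedBall
    E id ρ 1 (fun x _ => by simp only [ρ]; linarith [min_le_right (d x) 1]) 4 (by norm_num)
  refine ⟨u, fun x => 4 * ρ x, huE, ?_, fun x hx => ?_, fun y hy => hρd y (huE hy)⟩
  · have hcount := Measure.countable_meas_pos_of_disjoint_of_meas_iUnion_ne_top μ
      (As := fun y : u => closedBall (y : X) (ρ y)) (fun _ => measurableSet_closedBall)
      (fun y z hyz => hdisj y.2 z.2 (Subtype.coe_ne_coe.2 hyz))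
      (measure_ne_top_of_subset (iUnion_subset fun y =>
        (closedBall_subset_closedBall (by linarith [hρ y (huE y.2)])).trans
          ((hρd y (huE y.2)).trans inter_subset_left)) hμU)
    refine countable_coe_iff.1 (countable_univ_iff.1 (hcount.mono fun y _ => ?_))
    exact pos_iff_ne_zero.2 (hpos y (huE y.2) _ (hρ y (huE y.2)))
  · obtain ⟨y, hy, hxy⟩ := hcov x hx
    exact mem_biUnion hy (hxy (mem_closedBall_self (hρ x hx).le))

theorem exists_disjoint_finite_cover_up_to_measure {E U : Set X} (hU : IsOpen U) (hEU : E ⊆ U)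
    (hμU : μ U ≠ ⊤) (hpos : ∀ x ∈ E, ∀ s, 0 < s → μ (closedBall x s) ≠ 0) {P : X → X → Prop}
    (hP : ∀ x ∈ E, ∀ᶠ w in 𝓝 x, P x w) {τ : ℝ≥0∞} (hτ : 0 < τ) :
    ∃ (N : ℕ) (z : Fin N → X) (Q : Fin N → Set X), (∀ i, z i ∈ E) ∧
      (∀ i, MeasurableSet (Q i)) ∧ Pairwise (Disjoint on Q) ∧ (⋃ i, Q i) ⊆ U ∧
      (∀ i, ∀ w ∈ Q i, P (z i) w) ∧ μ (E \ ⋃ i, Q i) < τ := by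
  obtain ⟨u, ρ, huE, hu, hEu, hρ⟩ := exists_countable_cover_closedBall hU hEU hμU hpos hP
  rcases u.eq_empty_or_nonempty with rfl | hne
  · refine ⟨0, finZeroElim, finZeroElim, finZeroElim, finZeroElim, fun i => i.elim0, by simp,
      finZeroElim, ?_⟩
    simpa [subset_empty_iff.1 (by simpa using hEu)] using hτ
  obtain ⟨z, rfl⟩ := hu.exists_eq_range hne
  set V : ℕ → Set X := fun n => closedBall (z n) (ρ (z n))
  have hVU : ⋃ n, V n ⊆ U :=
    iUnion_subset fun n => (hρ _ (mem_range_self n)).trans inter_subset_left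
  obtain ⟨N, hN⟩ := exists_measure_iUnion_diff_iUnion_fin_lt (fun n => measurableSet_closedBall)
    (measure_ne_top_of_subset hVU hμU) hτ
  refine ⟨N, fun i => z i, disjointed fun i : Fin N => V i, fun i => huE (mem_range_self _),
    ?_, disjoint_disjointed _, ?_, fun i w hw => ?_, ?_⟩
  · exact fun i => disjointedRec (fun _ _ ht => ht.diff measurableSet_closedBall)
      measurableSet_closedBall
  · exact (iUnion_mono fun i => disjointed_subset _ i).trans
      ((iUnion_subset fun i : Fin N => subset_iUnion V i).trans hVU)
  · exact ((hρ _ (mem_range_self _)) (disjointed_subset _ i hw)).2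
  · rw [iUnion_disjointed]
    refine (measure_mono (sdiff_subset_sdiff_left ?_)).trans_lt hN
    simpa [V] using hEu

end Covering

theorem exists_partition_abs_avg_sub_avg_lt {X : Type*} [MetricSpace X] [MeasurableSpace X]
    [OpensMeasurableSpace X] {μ : Measure X} {E U : Set X} (hU : IsOpen U) (hEU : E ⊆ U)
    (hμU : μ U ≠ ⊤) (hpos : ∀ x ∈ E, ∀ s, 0 < s → μ (closedBall x s) ≠ 0) {r : ℝ}
    (hsymm : ∀ x ∈ E, Tendsto (fun y => μ (closedBall x r ∆ closedBall y r)) (𝓝 x) (𝓝 0))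
    {p : ℝ} (hp : 1 < p) {F : Set (X → ℝ)} (hF : ∀ f ∈ F, AEStronglyMeasurable f μ)
    {C : ℝ≥0∞} (hC : C ≠ ⊤) (hFbdd : ∀ f ∈ F, eLpNorm f (ENNReal.ofReal p) μ ≤ C) {m V : ℝ}
    (hm : 0 < m) (hEball : ∀ x ∈ E, μ (closedBall x r) ∈ Icc (ENNReal.ofReal m) (ENNReal.ofReal V))
    {δ : ℝ} (hδ : 0 < δ) {τ : ℝ≥0∞} (hτ : 0 < τ) :
    ∃ (N : ℕ) (z : Fin N → X) (Q : Fin N → Set X), (∀ i, z i ∈ E) ∧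
      (∀ i, MeasurableSet (Q i)) ∧ Pairwise (Disjoint on Q) ∧ (⋃ i, Q i) ⊆ U ∧
      (∀ f ∈ F, ∀ i, ∀ x ∈ E ∩ Q i, |avg μ r f x - avg μ r f (z i)| < δ) ∧
      μ (E \ ⋃ i, Q i) < τ := by
  obtain ⟨η, hη, hosc⟩ := exists_forall_abs_avg_sub_avg_lt (μ := μ) (r := r) (V := V) hp hC hm hδ
  obtain ⟨N, z, Q, hzE, hQm, hQd, hQU, hQη, hEQ⟩ := exists_disjoint_finite_cover_up_to_measure
    hU hEU hμU hpos (fun x hx => (hsymm x hx).eventually (gt_mem_nhds hη)) hτ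
  refine ⟨N, z, Q, hzE, hQm, hQd, hQU, fun f hf i x hx => ?_, hEQ⟩
  rw [abs_sub_comm]
  exact hosc f (hF f hf) (hFbdd f hf) _ _ (hEball _ (hzE i)) (hEball x hx.1) (hQη i x hx.2)

section StepFunction

variable {X : Type*} {N : ℕ}

noncomputable def stepFunction (Q : Fin N → Set X) (t : Fin N → ℝ) (x : X) : ℝ :=
  ∑ i, (Q i).indicator (fun _ => t i) x

theorem stepFunction_apply_of_mem {Q : Fin N → Set X} (hQ : Pairwise (Disjoint on Q))
    (t : Fin N → ℝ) {x : X} {i : Fin N} (hx : x ∈ Q i) : stepFunction Q t x = t i := by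
  rw [stepFunction, Finset.sum_eq_single i (fun j _ hji => indicator_of_notMem
    (fun hxj => (hQ hji).ne_of_mem hxj hx rfl) _) (by simp), indicator_of_mem hx]

theorem stepFunction_apply_of_notMem (Q : Fin N → Set X) (t : Fin N → ℝ) {x : X}
    (hx : x ∉ ⋃ i, Q i) : stepFunction Q t x = 0 :=
  Finset.sum_eq_zero fun i _ => indicator_of_notMem (fun h => hx (mem_iUnion_of_mem i h)) _

variable [MeasurableSpace X] {μ : Measure X} {p : ℝ}

theorem eLpNorm_le_of_abs_le_indicator_add_indicator (hp : 1 ≤ p) {h : X → ℝ} {A B : Set X}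
    (hA : MeasurableSet A) (hB : MeasurableSet B) {a b : ℝ} (ha : 0 ≤ a) (hb : 0 ≤ b)
    (hh : ∀ x, |h x| ≤ A.indicator (fun _ => a) x + B.indicator (fun _ => b) x) :
    eLpNorm h (ENNReal.ofReal p) μ ≤
      ENNReal.ofReal a * μ A ^ p⁻¹ + ENNReal.ofReal b * μ B ^ p⁻¹ := by
  have hp0 : ENNReal.ofReal p ≠ 0 := (ENNReal.ofReal_pos.2 (by linarith)).ne'
  calc eLpNorm h (ENNReal.ofReal p) μ
      ≤ eLpNorm (A.indicator (fun _ => a) + B.indicator fun _ => b) (ENNReal.ofReal p) μ :=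
        eLpNorm_mono_real hh
    _ ≤ eLpNorm (A.indicator fun _ => a) (ENNReal.ofReal p) μ +
          eLpNorm (B.indicator fun _ => b) (ENNReal.ofReal p) μ :=
        eLpNorm_add_le (aestronglyMeasurable_const.indicator hA)
          (aestronglyMeasurable_const.indicator hB) (ENNReal.one_le_ofReal.2 hp)
    _ = ENNReal.ofReal a * μ A ^ p⁻¹ + ENNReal.ofReal b * μ B ^ p⁻¹ := by
        rw [eLpNorm_indicator_const hA hp0 ENNReal.ofReal_ne_top,
          eLpNorm_indicator_const hB hp0 ENNReal.ofReal_ne_top,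
          ENNReal.toReal_ofReal (by linarith), Real.enorm_eq_ofReal ha, Real.enorm_eq_ofReal hb,
          one_div]

theorem eLpNorm_indicator_sub_indicator_stepFunction_le (hp : 1 ≤ p) {E : Set X} {u : X → ℝ}
    {Q : Fin N → Set X} (hQm : ∀ i, MeasurableSet (Q i)) (hQd : Pairwise (Disjoint on Q))
    {B : Set X} (hBm : MeasurableSet B) (hEB : E \ ⋃ i, Q i ⊆ B) {t : Fin N → ℝ} {a b : ℝ}
    (ha : 0 ≤ a) (hb : 0 ≤ b) (hut : ∀ i, ∀ x ∈ E ∩ Q i, |u x - t i| ≤ a)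
    (hu : ∀ x ∈ E, |u x| ≤ b) :
    eLpNorm (fun x => E.indicator u x - E.indicator (stepFunction Q t) x) (ENNReal.ofReal p) μ ≤
      ENNReal.ofReal a * μ (⋃ i, Q i) ^ p⁻¹ + ENNReal.ofReal b * μ B ^ p⁻¹ := by
  refine eLpNorm_le_of_abs_le_indicator_add_indicator hp (MeasurableSet.iUnion hQm) hBm ha hb
    fun x => ?_
  by_cases hxE : x ∈ E
  · rw [indicator_of_mem hxE, indicator_of_mem hxE]
    by_cases hxQ : x ∈ ⋃ i, Q i
    · obtain ⟨i, hi⟩ := mem_iUnion.1 hxQ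
      rw [stepFunction_apply_of_mem hQd t hi, indicator_of_mem hxQ]
      exact (hut i x ⟨hxE, hi⟩).trans (le_add_of_nonneg_right (indicator_nonneg (fun _ _ => hb) x))
    · rw [stepFunction_apply_of_notMem Q t hxQ, sub_zero, indicator_of_notMem hxQ,
        indicator_of_mem (hEB ⟨hxE, hxQ⟩), zero_add]
      exact hu x hxE
  · rw [indicator_of_notMem hxE, indicator_of_notMem hxE, sub_zero, abs_zero]
    exact add_nonneg (indicator_nonneg (fun _ _ => ha) x) (indicator_nonneg (fun _ _ => hb) x)

end StepFunction

theorem exists_finset_forall_exists_abs_sub_lt (N : ℕ) {M : ℝ} (hM : 0 ≤ M) {δ : ℝ}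
    (hδ : 0 < δ) : ∃ T : Finset (Fin N → ℝ), ∀ v : Fin N → ℝ, (∀ i, |v i| ≤ M) →
      ∃ t ∈ T, ∀ i, |v i - t i| < δ := by
  obtain ⟨T, -, hT, hcov⟩ := (isCompact_closedBall (0 : Fin N → ℝ) M).finite_cover_balls hδ
  refine ⟨hT.toFinset, fun v hv => ?_⟩
  obtain ⟨t, ht, hvt⟩ := mem_iUnion₂.1
    (hcov (mem_closedBall_zero_iff.2 ((pi_norm_le_iff_of_nonneg hM).2 hv)))
  exact ⟨t, hT.mem_toFinset.2 ht, fun i => (dist_le_pi_dist v t i).trans_lt (mem_ball.1 hvt)⟩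

theorem exists_pos_ofReal_mul_add_mul_ofReal_rpow_lt {a b c : ℝ≥0∞} (ha : a ≠ ⊤) (hb : b ≠ ⊤)
    {q : ℝ} (hq : 0 < q) (hc : 0 < c) :
    ∃ s : ℝ, 0 < s ∧ ENNReal.ofReal s * a + b * ENNReal.ofReal s ^ q < c := by
  have hlim : Tendsto (fun s : ℝ => ENNReal.ofReal s * a + b * ENNReal.ofReal s ^ q)
      (𝓝[>] 0) (𝓝 0) := by
    have h₁ : Tendsto ENNReal.ofReal (𝓝 0) (𝓝 0) := by
      simpa using ENNReal.continuous_ofReal.tendsto 0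
    have h₂ : Tendsto (fun s : ℝ => ENNReal.ofReal s ^ q) (𝓝 0) (𝓝 0) := by
      simpa [Function.comp_def, ENNReal.zero_rpow_of_pos hq] using
        ((ENNReal.continuous_rpow_const (y := q)).comp ENNReal.continuous_ofReal).tendsto 0
    simpa using ((ENNReal.Tendsto.mul_const h₁ (Or.inr ha)).add
      (ENNReal.Tendsto.const_mul h₂ (Or.inr hb))).mono_left nhdsWithin_le_nhds
  exact ((hlim.eventually (gt_mem_nhds hc)).and self_mem_nhdsWithin).exists.imp
    fun s hs => ⟨hs.2, hs.1⟩

/-- The family of truncated averages `{(A_r f)·χ_E : f ∈ F}` is totally bounded in `L^p`. -/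
theorem avg_indicator_totallyBounded {X : Type*} [MetricSpace X] [MeasurableSpace X]
    [BorelSpace X] (μ : Measure X)
    (hball : ∀ (x : X) (r : ℝ), 0 < r → μ (closedBall x r) ≠ 0 ∧ μ (closedBall x r) ≠ ⊤)
    (γ : ℝ) (hγ : 1 ≤ γ)
    (hdbl : ∀ (x : X) (r : ℝ), 0 < r →
      μ (closedBall x (2 * r)) ≤ ENNReal.ofReal γ * μ (closedBall x r))
    (hsymm : ∀ (x : X) (r : ℝ), 0 < r →
      Tendsto (fun y => μ (symmDiff (closedBall x r) (closedBall y r))) (nhds x) (nhds 0))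
    (p : ℝ) (hp : 1 < p)
    (F : Set (X → ℝ)) (hFmem : ∀ f ∈ F, MemLp f (ENNReal.ofReal p) μ)
    (C : ℝ≥0∞) (hC : C ≠ ⊤) (hFbdd : ∀ f ∈ F, eLpNorm f (ENNReal.ofReal p) μ ≤ C)
    (E : Set X) (hE : Bornology.IsBounded E)
    (r : ℝ) (hr : 0 < r) :
    ∀ ε : ℝ, 0 < ε → ∃ G : Finset (X → ℝ), ∀ f ∈ F, ∃ g ∈ G,
      eLpNorm (fun x => E.indicator (avg μ r f) x - g x) (ENNReal.ofReal p) μ <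
        ENNReal.ofReal ε := by
  classical
  intro ε hε
  obtain ⟨m, V, hm, hV, hEball⟩ := exists_measure_closedBall_mem_Icc (by linarith) hdbl hball hE hr
  set M := C.toReal * V ^ (1 - p⁻¹) / m
  have hM : ∀ f ∈ F, ∀ x ∈ E, |avg μ r f x| ≤ M := fun f hf x hx =>
    abs_avg_le hp.le (hFmem f hf).aestronglyMeasurable (hFbdd f hf) hC hm (hEball x hx)
  have hU : μ (thickening 1 E) ≠ ⊤ :=
    measure_ne_top_of_isBounded (fun x s hs => (hball x s hs).2) hE.thickening
  obtain ⟨δ, hδ, hδε⟩ := exists_pos_ofReal_mul_add_mul_ofReal_rpow_lt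
    (a := μ (thickening 1 E) ^ p⁻¹) (b := ENNReal.ofReal M)
    (ENNReal.rpow_ne_top_of_nonneg (inv_nonneg.2 (by linarith)) hU) ENNReal.ofReal_ne_top
    (inv_pos.2 (by linarith : 0 < p)) (ENNReal.ofReal_pos.2 hε)
  obtain ⟨N, z, Q, hzE, hQm, hQd, hQU, hosc, hEQ⟩ := exists_partition_abs_avg_sub_avg_lt
    isOpen_thickening (self_subset_thickening one_pos E) hU (fun x _ s hs => (hball x s hs).1)
    (fun x _ => hsymm x r hr) hp (fun f hf => (hFmem f hf).aestronglyMeasurable) hC hFbdd hm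
    hEball (half_pos hδ) (ENNReal.ofReal_pos.2 hδ)
  obtain ⟨T, hT⟩ := exists_finset_forall_exists_abs_sub_lt N (by positivity : 0 ≤ M) (half_pos hδ)
  refine ⟨T.image fun t => E.indicator (stepFunction Q t), fun f hf => ?_⟩
  obtain ⟨t, htT, hvt⟩ := hT (fun i => avg μ r f (z i)) fun i => hM f hf _ (hzE i)
  have hclose : ∀ i, ∀ x ∈ E ∩ Q i, |avg μ r f x - t i| ≤ δ := fun i x hx =>
    ((abs_sub_le _ (avg μ r f (z i)) _).trans_lt
      ((add_lt_add (hosc f hf i x hx) (hvt i)).trans_eq (add_halves δ))).le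
  refine ⟨_, Finset.mem_image_of_mem _ htT, ?_⟩
  calc _ ≤ ENNReal.ofReal δ * μ (⋃ i, Q i) ^ p⁻¹ +
        ENNReal.ofReal M * μ (toMeasurable μ (E \ ⋃ i, Q i)) ^ p⁻¹ :=
        eLpNorm_indicator_sub_indicator_stepFunction_le hp.le hQm hQd
          (measurableSet_toMeasurable _ _) (subset_toMeasurable _ _) hδ.le (by positivity)
          hclose (hM f hf)
    _ ≤ ENNReal.ofReal δ * μ (thickening 1 E) ^ p⁻¹ +
        ENNReal.ofReal M * ENNReal.ofReal δ ^ p⁻¹ := by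
      rw [measure_toMeasurable]
      gcongr
    _ < ENNReal.ofReal ε := hδε
end

section
/- Let X be a doubling metric measure space where closed balls of positive radius have positive finite measure. For n ∈ ℕ and a fixed basepoint x₀, the set L(n) = {f ∈ L^p(X) : f has an n-Lipschitz representative, ‖f‖_p ≤ n, supp f ⊆ B(x₀,n)} is closed in L^p(X). -/
/-!
Convergence in `Lᵖ` gives a subsequence converging almost everywhere, and since every ball has
positive measure the set where it converges is dense. On that set the limit is `n`-Lipschitz and
vanishes off the closed ball, so its Lipschitz extension is a representative with both properties.
-/

open MeasureTheory Metric Filter Function Set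
open scoped ENNReal NNReal Topology

theorem Metric.isOpenPosMeasure_of_measure_closedBall_ne_zero {X : Type*} [PseudoMetricSpace X]
    [MeasurableSpace X] {μ : Measure X} (h : ∀ (x : X) (r : ℝ), 0 < r → μ (closedBall x r) ≠ 0) :
    μ.IsOpenPosMeasure where
  open_pos U hU := fun ⟨x, hx⟩ hU0 => by
    obtain ⟨r, hr, hrU⟩ := Metric.isOpen_iff.mp hU x hx
    exact h x (r / 2) (half_pos hr)
      (measure_mono_null ((closedBall_subset_ball (half_lt_self hr)).trans hrU) hU0)

theorem LipschitzOnWith.of_tendsto {α β ι : Type*} [PseudoEMetricSpace α] [PseudoEMetricSpace β]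
    {l : Filter ι} [l.NeBot] {K : ℝ≥0} {g : ι → α → β} {F : α → β} {s : Set α}
    (hg : ∀ i, LipschitzOnWith K (g i) s) (hF : ∀ x ∈ s, Tendsto (fun i => g i x) l (𝓝 (F x))) :
    LipschitzOnWith K F s := by
  simp only [lipschitzOnWith_iff_restrict] at hg ⊢
  have hlim : Tendsto (fun i => s.domRestrict (g i)) l (𝓝 (s.domRestrict F)) :=
    tendsto_pi_nhds.mpr fun x => hF x x.2
  exact (isClosed_setOfPred_lipschitzWith K).mem_of_tendsto hlim (Eventually.of_forall hg)

theorem exists_lipschitzWith_ae_eq_of_ae_tendsto {X ι : Type*} [PseudoMetricSpace X]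
    [MeasurableSpace X] {μ : Measure X} [μ.IsOpenPosMeasure] {l : Filter ι} [l.NeBot] {K : ℝ≥0}
    {g : ι → X → ℝ} {F : X → ℝ} {s : Set X} (hg : ∀ i, LipschitzWith K (g i)) (hs : IsClosed s)
    (hsupp : ∀ i, support (g i) ⊆ s) (hF : ∀ᵐ x ∂μ, Tendsto (fun i => g i x) l (𝓝 (F x))) :
    ∃ G : X → ℝ, LipschitzWith K G ∧ F =ᵐ[μ] G ∧ support G ⊆ s := by
  set T := {x | Tendsto (fun i => g i x) l (𝓝 (F x))}
  have hFT : LipschitzOnWith K F T :=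
    .of_tendsto (l := l) (fun i => (hg i).lipschitzOnWith) fun _ hx => hx
  obtain ⟨G, hG, hFG⟩ := hFT.extend_real
  refine ⟨G, hG, hF.mono fun _ hx => hFG hx, support_subset_iff'.mpr ?_⟩
  have hG0 : EqOn G 0 (sᶜ ∩ T) := fun x ⟨hxs, hxT⟩ => by
    have hg0 : ∀ i, g i x = 0 := fun i => notMem_support.mp fun h => hxs (hsupp i h)
    rw [← hFG hxT, Pi.zero_apply]
    exact tendsto_nhds_unique hxT (by simpa only [hg0] using tendsto_const_nhds)
  exact hG0.of_subset_closure hG.continuous.continuousOn continuousOn_const inter_subset_left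
    ((μ.dense_of_ae hF).open_subset_closure_inter hs.isOpen_compl)

theorem Ln_isClosed_general {X : Type*} [MetricSpace X] [MeasurableSpace X]
    (μ : Measure X)
    (hball : ∀ (x : X) (r : ℝ), 0 < r → μ (closedBall x r) ≠ 0 ∧ μ (closedBall x r) ≠ ⊤)
    (p : ℝ≥0∞) [Fact (1 ≤ p)]
    (x₀ : X) (n : ℕ) :
    IsClosed {f : MeasureTheory.Lp ℝ p μ | ‖f‖ ≤ (n : ℝ) ∧
      ∃ g : X → ℝ, LipschitzWith (n : NNReal) g ∧ (⇑f =ᵐ[μ] g) ∧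
        Function.support g ⊆ closedBall x₀ (n : ℝ)} := by
  have := isOpenPosMeasure_of_measure_closedBall_ne_zero fun x r hr => (hball x r hr).1
  refine isSeqClosed_iff_isClosed.mp fun u f hu hlim =>
    ⟨le_of_tendsto' hlim.norm fun k => (hu k).1, ?_⟩
  choose g hg hug hsupp using fun k => (hu k).2
  obtain ⟨ns, -, hns⟩ := (tendstoInMeasure_of_tendsto_Lp hlim).exists_seq_tendsto_ae
  have hgf : ∀ᵐ x ∂μ, Tendsto (fun k => g (ns k) x) atTop (𝓝 (f x)) := by
    filter_upwards [hns, ae_all_iff.mpr hug] with x hx hxg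
    simpa only [hxg] using hx
  exact exists_lipschitzWith_ae_eq_of_ae_tendsto (fun k => hg (ns k)) isClosed_closedBall
    (fun k => hsupp (ns k)) hgf

theorem Ln_isClosed {X : Type*} [MetricSpace X] [MeasurableSpace X] [BorelSpace X]
    (μ : Measure X)
    (hball : ∀ (x : X) (r : ℝ), 0 < r → μ (closedBall x r) ≠ 0 ∧ μ (closedBall x r) ≠ ⊤)
    (γ : ℝ) (hγ : 1 ≤ γ)
    (hdbl : ∀ (x : X) (r : ℝ), 0 < r →
      μ (closedBall x (2 * r)) ≤ ENNReal.ofReal γ * μ (closedBall x r))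
    (p : ℝ≥0∞) [Fact (1 ≤ p)] (hp' : p ≠ ⊤)
    (x₀ : X) (n : ℕ) :
    IsClosed {f : MeasureTheory.Lp ℝ p μ | ‖f‖ ≤ (n : ℝ) ∧
      ∃ g : X → ℝ, LipschitzWith (n : NNReal) g ∧ (⇑f =ᵐ[μ] g) ∧
        Function.support g ⊆ closedBall x₀ (n : ℝ)} :=
  Ln_isClosed_general μ hball p x₀ n
end
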